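/- Let K be a field of characteristic zero, let 0 ≤ i₁ < i₂ < i₃ < i₄ be natural numbers, J = {i₁,i₂,i₃,i₄}, and let β ∈ K be a root of unity. Regard D_J as a polynomial in K[x]. If β^{i₁} = β^{i₂} = β^{i₃} = β^{i₄}, then β is a root of D_J of multiplicity exactly 4. If exactly three of the four powers β^{i₁}, β^{i₂}, β^{i₃}, β^{i₄} are equal to a common value and the remaining one is different, then β is a root of D_J of multiplicity exactly 1. -/

import Mathlib

open Polynomial

/-- The 4×4 matrix `𝐌_J(x)` for `J = {a,b,c,d}` (columns in the given order),
whose column for exponent `i` is `(1, i, x^i, i·x^i)ᵀ`, and its determinant `D_J`. -/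
noncomputable def Dfour (a b c d : ℕ) : Polynomial ℤ :=
  (Matrix.of fun r (j : Fin 4) =>
    ![(1 : Polynomial ℤ), ((![a,b,c,d] j : ℕ) : Polynomial ℤ),
      X ^ (![a,b,c,d] j), ((![a,b,c,d] j : ℕ) : Polynomial ℤ) * X ^ (![a,b,c,d] j)] r).det

/-!
Expanding along the first two rows, `D_J` is a sum over the six pairs of columns `{j, k}`
of `±(i_k - i_j)(i_m - i_l) x^(i_j + i_k)`, where `{l, m}` is the complementary pair.
Substituting `x ↦ βx` moves the root `β` to `1` and weights the monomial `x^(i_j + i_k)` by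
`β^i_j β^i_k`; the multiplicity at `1` is then read off from derivatives at `1`, where the
`k`-th derivative of `x^e` is the falling factorial `e (e-1) ⋯ (e-k+1)`.

If all `β^i_j` equal `γ`, every weight is `γ²`: the derivatives of order `0, …, 3` vanish by
polynomial identities in the exponents, and the fourth is `2γ² ∏_{j<k} (i_k - i_j) ≠ 0`.
If exactly three agree, the alternating symmetry of `D_J` in its columns lets us put the odd one
last; with `β^i₁ = β^i₂ = β^i₃ = γ ≠ δ = β^i₄` the value at `1` vanishes and the first derivative
is `γ(γ - δ)(i₂ - i₁)(i₃ - i₁)(i₃ - i₂) ≠ 0`.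
-/

theorem Nat.cast_descFactorial_succ {R : Type*} [Ring R] (n k : ℕ) :
    (n.descFactorial (k + 1) : R) = n.descFactorial k * (n - k) := by
  rw [← descPochhammer_eval_eq_descFactorial, ← descPochhammer_eval_eq_descFactorial,
    descPochhammer_succ_eval]

namespace Polynomial

theorem eval_one_iterate_derivative_X_pow {R : Type*} [CommSemiring R] (n k : ℕ) :
    eval 1 (derivative^[k] (X ^ n : R[X])) = n.descFactorial k := by
  simp [iterate_derivative_X_pow_eq_smul]

theorem rootMultiplicity_neg {R : Type*} [CommRing R] (p : R[X]) (t : R) :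
    (-p).rootMultiplicity t = p.rootMultiplicity t := by
  classical
  simp only [rootMultiplicity_eq_multiplicity, multiplicity_neg, neg_eq_zero]

theorem rootMultiplicity_comp_C_mul_X_one {R : Type*} [CommRing R] (p : R[X]) {β : R}
    (hβ : IsUnit β) : (p.comp (C β * X)).rootMultiplicity 1 = p.rootMultiplicity β := by
  simpa using rootMultiplicity_comp_C_mul_X_add_C p β 0 1 hβ

theorem rootMultiplicity_eq_of_iterate_derivative {R : Type*} [CommRing R] [NoZeroDivisors R]
    [CharZero R] {p : R[X]} {t : R} {n : ℕ}
    (hroot : ∀ m < n, eval t (derivative^[m] p) = 0) (hn : eval t (derivative^[n] p) ≠ 0) :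
    p.rootMultiplicity t = n := by
  have hp : p ≠ 0 := by
    rintro rfl
    simp at hn
  apply le_antisymm
  · by_contra! h
    exact hn (isRoot_iterate_derivative_of_lt_rootMultiplicity h)
  · cases n with
    | zero => exact Nat.zero_le _
    | succ n =>
      exact lt_rootMultiplicity_of_isRoot_iterate_derivative hp fun m hm => hroot m (by omega)

end Polynomial

theorem Dfour_eq (a b c d : ℕ) :
    Dfour a b c d =
      C (((b : ℤ) - a) * ((d : ℤ) - c)) * (X ^ (a + b) + X ^ (c + d))
      - C (((c : ℤ) - a) * ((d : ℤ) - b)) * (X ^ (a + c) + X ^ (b + d))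
      + C (((d : ℤ) - a) * ((c : ℤ) - b)) * (X ^ (a + d) + X ^ (b + c)) := by
  rw [Dfour]
  simp [Matrix.det_succ_row_zero, Fin.sum_univ_succ, Fin.succAbove, pow_add]
  ring

theorem Dfour_swap_last (a b c d : ℕ) : Dfour a b c d = -Dfour a b d c := by
  simp only [Dfour_eq, map_mul, map_sub]
  ring

theorem Dfour_rotate_last_three (a b c d : ℕ) : Dfour a b c d = Dfour a c d b := by
  simp only [Dfour_eq, map_mul, map_sub]
  ring

theorem Dfour_rotate (a b c d : ℕ) : Dfour a b c d = -Dfour b c d a := by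
  simp only [Dfour_eq, map_mul, map_sub]
  ring

theorem Dfour_map_comp_C_mul_X {R : Type*} [CommRing R] (a b c d : ℕ) (β : R) :
    ((Dfour a b c d).map (Int.castRingHom R)).comp (C β * X) =
      C (((b : R) - a) * ((d : R) - c)) *
          (C (β ^ (a + b)) * X ^ (a + b) + C (β ^ (c + d)) * X ^ (c + d))
      - C (((c : R) - a) * ((d : R) - b)) *
          (C (β ^ (a + c)) * X ^ (a + c) + C (β ^ (b + d)) * X ^ (b + d))
      + C (((d : R) - a) * ((c : R) - b)) *
          (C (β ^ (a + d)) * X ^ (a + d) + C (β ^ (b + c)) * X ^ (b + c)) := by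
  rw [Dfour_eq]
  simp only [Polynomial.map_add, Polynomial.map_sub, Polynomial.map_mul, map_C,
    Polynomial.map_pow, map_X, add_comp, sub_comp, mul_comp, C_comp, X_pow_comp, mul_pow, C_pow,
    Int.coe_castRingHom, Int.cast_mul, Int.cast_sub, Int.cast_natCast]

theorem eval_one_iterate_derivative_Dfour_comp {R : Type*} [CommRing R] (a b c d k : ℕ)
    (β : R) :
    eval 1 (derivative^[k] (((Dfour a b c d).map (Int.castRingHom R)).comp (C β * X))) =
      ((b : R) - a) * ((d : R) - c) *
          (β ^ (a + b) * (a + b).descFactorial k + β ^ (c + d) * (c + d).descFactorial k)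
      - ((c : R) - a) * ((d : R) - b) *
          (β ^ (a + c) * (a + c).descFactorial k + β ^ (b + d) * (b + d).descFactorial k)
      + ((d : R) - a) * ((c : R) - b) *
          (β ^ (a + d) * (a + d).descFactorial k + β ^ (b + c) * (b + c).descFactorial k) := by
  simp only [Dfour_map_comp_C_mul_X, iterate_map_add, iterate_map_sub, iterate_derivative_C_mul,
    eval_add, eval_sub, eval_mul, eval_C, eval_one_iterate_derivative_X_pow]

section

variable {K : Type*} [Field K] [CharZero K] {a b c d : ℕ} {β : K}

theorem rootMultiplicity_Dfour_eq_four (hab : a < b) (hbc : b < c) (hcd : c < d) (hβ : β ≠ 0)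
    (h₁ : β ^ a = β ^ b) (h₂ : β ^ b = β ^ c) (h₃ : β ^ c = β ^ d) :
    ((Dfour a b c d).map (Int.castRingHom K)).rootMultiplicity β = 4 := by
  rw [← rootMultiplicity_comp_C_mul_X_one _ hβ.isUnit]
  apply rootMultiplicity_eq_of_iterate_derivative
  · intro k hk
    rw [eval_one_iterate_derivative_Dfour_comp]
    simp only [pow_add, ← h₃, ← h₂, ← h₁]
    interval_cases k <;>
    · simp only [Nat.cast_descFactorial_succ, Nat.descFactorial_zero, Nat.cast_one]
      push_cast
      ring
  · have hderiv₄ :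
        eval 1 (derivative^[4] (((Dfour a b c d).map (Int.castRingHom K)).comp (C β * X))) =
          2 * β ^ a * β ^ a * (((b : K) - a) * ((c : K) - a) * ((d : K) - a) *
            ((c : K) - b) * ((d : K) - b) * ((d : K) - c)) := by
      rw [eval_one_iterate_derivative_Dfour_comp]
      simp only [pow_add, ← h₃, ← h₂, ← h₁, Nat.cast_descFactorial_succ, Nat.descFactorial_zero,
        Nat.cast_one]
      push_cast
      ring
    rw [hderiv₄]
    simp [sub_eq_zero, hβ, hab.ne', hbc.ne', hcd.ne', (hab.trans hbc).ne', (hbc.trans hcd).ne',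
      (hab.trans (hbc.trans hcd)).ne']

theorem rootMultiplicity_Dfour_eq_one (hab : a < b) (hbc : b < c) (hβ : β ≠ 0)
    (h₁ : β ^ a = β ^ b) (h₂ : β ^ a = β ^ c) (h₃ : β ^ a ≠ β ^ d) :
    ((Dfour a b c d).map (Int.castRingHom K)).rootMultiplicity β = 1 := by
  rw [← rootMultiplicity_comp_C_mul_X_one _ hβ.isUnit]
  apply rootMultiplicity_eq_of_iterate_derivative
  · intro k hk
    obtain rfl : k = 0 := by omega
    rw [eval_one_iterate_derivative_Dfour_comp]
    simp only [pow_add, ← h₁, ← h₂, Nat.descFactorial_zero, Nat.cast_one]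
    ring
  · have hderiv₁ :
        eval 1 (derivative^[1] (((Dfour a b c d).map (Int.castRingHom K)).comp (C β * X))) =
          β ^ a * (β ^ a - β ^ d) * (((b : K) - a) * ((c : K) - a) * ((c : K) - b)) := by
      rw [eval_one_iterate_derivative_Dfour_comp]
      simp only [pow_add, ← h₁, ← h₂, Nat.descFactorial_one]
      push_cast
      ring
    rw [hderiv₁]
    simp [sub_eq_zero, hβ, h₃, hab.ne', hbc.ne', (hab.trans hbc).ne']

end

/-- for a field `K` of characteristic zero, `i₁ < i₂ < i₃ < i₄`,
and a root of unity `β ∈ K`: if all four powers `β^{i_j}` are equal then `β` is a root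
of `D_J` (viewed in `K[x]`) of multiplicity exactly 4; if exactly three of the powers
are equal and the remaining one is different, then the multiplicity is exactly 1. -/
theorem Dfour_rootMultiplicity (K : Type*) [Field K] [CharZero K]
    (i₁ i₂ i₃ i₄ : ℕ) (h₁₂ : i₁ < i₂) (h₂₃ : i₂ < i₃) (h₃₄ : i₃ < i₄)
    (β : K) (hβ : ∃ m : ℕ, 0 < m ∧ β ^ m = 1) :
    ((β ^ i₁ = β ^ i₂ ∧ β ^ i₂ = β ^ i₃ ∧ β ^ i₃ = β ^ i₄) →
      ((Dfour i₁ i₂ i₃ i₄).map (Int.castRingHom K)).rootMultiplicity β = 4) ∧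
    (((β ^ i₁ = β ^ i₂ ∧ β ^ i₁ = β ^ i₃ ∧ β ^ i₁ ≠ β ^ i₄) ∨
      (β ^ i₁ = β ^ i₂ ∧ β ^ i₁ = β ^ i₄ ∧ β ^ i₁ ≠ β ^ i₃) ∨
      (β ^ i₁ = β ^ i₃ ∧ β ^ i₁ = β ^ i₄ ∧ β ^ i₁ ≠ β ^ i₂) ∨
      (β ^ i₂ = β ^ i₃ ∧ β ^ i₂ = β ^ i₄ ∧ β ^ i₂ ≠ β ^ i₁)) →
      ((Dfour i₁ i₂ i₃ i₄).map (Int.castRingHom K)).rootMultiplicity β = 1) := by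
  obtain ⟨m, hm, hβm⟩ := hβ
  have hβ₀ : β ≠ 0 := by
    rintro rfl
    exact zero_ne_one ((zero_pow hm.ne').symm.trans hβm)
  refine ⟨fun ⟨h₁, h₂, h₃⟩ => rootMultiplicity_Dfour_eq_four h₁₂ h₂₃ h₃₄ hβ₀ h₁ h₂ h₃, ?_⟩
  rintro (⟨h₁, h₂, h₃⟩ | ⟨h₁, h₂, h₃⟩ | ⟨h₁, h₂, h₃⟩ | ⟨h₁, h₂, h₃⟩)
  · exact rootMultiplicity_Dfour_eq_one h₁₂ h₂₃ hβ₀ h₁ h₂ h₃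
  · rw [Dfour_swap_last, Polynomial.map_neg, rootMultiplicity_neg]
    exact rootMultiplicity_Dfour_eq_one h₁₂ (h₂₃.trans h₃₄) hβ₀ h₁ h₂ h₃
  · rw [Dfour_rotate_last_three]
    exact rootMultiplicity_Dfour_eq_one (h₁₂.trans h₂₃) h₃₄ hβ₀ h₁ h₂ h₃
  · rw [Dfour_rotate, Polynomial.map_neg, rootMultiplicity_neg]
    exact rootMultiplicity_Dfour_eq_one h₂₃ h₃₄ hβ₀ h₁ h₂ h₃
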